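/- Let q ≥ 1, α > 0, and let n_1 ≥ ... ≥ n_q ≥ 0 be counts in decreasing order with positive total, m = #{k : n_k > 0}, and k' the largest index with n_{k'} > 0. The function g(α) = -∑_{l=1}^{k'-1} log(1 + n_l/α) is non-decreasing in α; consequently, for any 0 < α ≤ α', the bound -m log q - ∑_{l=1}^{k'-1} log(1 + n_l/α') is also a valid upper bound on the local local BDeu score -log pGam(α, n) + ∑_k log pGam(α/q, n_k). -/

import Mathlib

/-- `pGam α x = Γ(x+α)/Γ(α)`. -/
noncomputable def pGam (α : ℝ) (x : ℕ) : ℝ := Real.Gamma (x + α) / Real.Gamma α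

/-!
With `pGam α m = α (α + 1) ⋯ (α + m - 1)`, the recursion `pGam α (m + 1) = α · pGam (α + 1) m`
shows that dividing the prior by `q` divides every nonzero cell by at least `q`. Splitting the
total count into cells one at a time uses super-multiplicativity with a correction factor:
for `b ≥ 1`, `pGam α a · (1 + a / α) · pGam α b = pGam (α + 1) a · pGam α b` is at most
`pGam (α + b) a · pGam α b = pGam α (a + b)`. This yields a factor `1 + n_l / α` for every cell
before the last nonzero one, and these factors only shrink when `α` grows.
-/

open Finset Real

lemma sum_range_eq_sum_range_of_eq_zero {M : Type*} [AddCommMonoid M] {f : ℕ → M} {k q : ℕ}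
    (hkq : k ≤ q) (h : ∀ l, k ≤ l → l < q → f l = 0) :
    ∑ l ∈ range q, f l = ∑ l ∈ range k, f l :=
  (sum_subset (range_subset_range.2 hkq) fun l hlq hlk =>
    h l (by simpa using hlk) (by simpa using hlq)).symm

section pGam

variable {α β : ℝ}

lemma pGam_pos (hα : 0 < α) (m : ℕ) : 0 < pGam α m :=
  div_pos (Gamma_pos_of_pos (by positivity)) (Gamma_pos_of_pos hα)

lemma pGam_zero (hα : 0 < α) : pGam α 0 = 1 := by
  simp [pGam, (Gamma_pos_of_pos hα).ne']

lemma pGam_add (hα : 0 < α) (a b : ℕ) : pGam α (a + b) = pGam α a * pGam (α + a) b := by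
  have hΓ : Gamma (a + α) ≠ 0 := (Gamma_pos_of_pos (by positivity)).ne'
  simp only [pGam, Nat.cast_add]
  rw [div_mul_div_comm, mul_comm (Gamma (a + α)), add_comm α, mul_div_mul_right _ _ hΓ]
  ring_nf

lemma pGam_one (hα : 0 < α) : pGam α 1 = α := by
  rw [pGam, Nat.cast_one, add_comm, Gamma_add_one hα.ne', mul_div_cancel_right₀ _
    (Gamma_pos_of_pos hα).ne']

lemma pGam_succ (hα : 0 < α) (m : ℕ) : pGam α (m + 1) = pGam α m * (α + m) := by
  rw [pGam_add hα, pGam_one (by positivity)]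

lemma pGam_mono (hβ : 0 < β) (hβα : β ≤ α) (m : ℕ) : pGam β m ≤ pGam α m := by
  induction m with
  | zero => rw [pGam_zero hβ, pGam_zero (hβ.trans_le hβα)]
  | succ m ih =>
    rw [pGam_succ hβ, pGam_succ (hβ.trans_le hβα)]
    gcongr
    exact (pGam_pos (hβ.trans_le hβα) m).le

lemma pGam_succ_eq_mul_pGam_add_one (hα : 0 < α) (m : ℕ) :
    pGam α (m + 1) = α * pGam (α + 1) m := by
  rw [add_comm m, pGam_add hα, pGam_one hα, Nat.cast_one]

lemma pGam_mul_one_add_div (hα : 0 < α) (a : ℕ) : pGam α a * (1 + a / α) = pGam (α + 1) a := by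
  have h := pGam_succ_eq_mul_pGam_add_one hα a
  rw [pGam_succ hα] at h
  field_simp
  linarith

lemma pGam_mul_one_add_div_mul_le (hα : 0 < α) (a : ℕ) {b : ℕ} (hb : 1 ≤ b) :
    pGam α a * (1 + a / α) * pGam α b ≤ pGam α (a + b) :=
  calc pGam α a * (1 + a / α) * pGam α b = pGam (α + 1) a * pGam α b := by
        rw [pGam_mul_one_add_div hα]
    _ ≤ pGam (α + b) a * pGam α b := by
        gcongr
        · exact (pGam_pos hα b).le
        · exact pGam_mono (by positivity) (by gcongr; exact_mod_cast hb) a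
    _ = pGam α (a + b) := by rw [add_comm a, pGam_add hα, mul_comm]

lemma pGam_div_le (hα : 0 < α) {q : ℝ} (hq : 1 ≤ q) {m : ℕ} (hm : 0 < m) :
    pGam (α / q) m ≤ pGam α m / q := by
  obtain ⟨m, rfl⟩ := Nat.exists_eq_add_of_lt hm
  have hαq : 0 < α / q := by positivity
  rw [zero_add, pGam_succ_eq_mul_pGam_add_one hαq, pGam_succ_eq_mul_pGam_add_one hα,
    mul_div_right_comm]
  gcongr
  exact pGam_mono (by positivity) (by gcongr; exact div_le_self hα.le hq) m

lemma log_pGam_div_le (hα : 0 < α) {q : ℝ} (hq : 1 ≤ q) (m : ℕ) :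
    log (pGam (α / q) m) ≤ log (pGam α m) - if 0 < m then log q else 0 := by
  rcases m.eq_zero_or_pos with rfl | hm
  · simp [pGam_zero hα, pGam_zero (show 0 < α / q by positivity)]
  · rw [if_pos hm, ← log_div (pGam_pos hα m).ne' (by positivity)]
    exact log_le_log (pGam_pos (by positivity) m) (pGam_div_le hα hq hm)

lemma sum_log_pGam_add_sum_log_le_log_pGam_sum (hα : 0 < α) (f : ℕ → ℕ) {m : ℕ}
    (hm : 0 < f m) :
    ∑ k ∈ range (m + 1), log (pGam α (f k)) + ∑ l ∈ range m, log (1 + f l / α)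
      ≤ log (pGam α (∑ k ∈ range (m + 1), f k)) := by
  induction m generalizing f with
  | zero => simp
  | succ m ih =>
    have hrest : 1 ≤ ∑ k ∈ range (m + 1), f (k + 1) :=
      hm.trans_le (single_le_sum (f := fun k => f (k + 1)) (fun _ _ => Nat.zero_le _)
        (self_mem_range_succ m))
    have h0 := pGam_pos hα (f 0)
    have hr := pGam_pos hα (∑ k ∈ range (m + 1), f (k + 1))
    have hkey := log_le_log (by positivity) (pGam_mul_one_add_div_mul_le hα (f 0) hrest)
    rw [log_mul (by positivity) hr.ne', log_mul h0.ne' (by positivity)] at hkey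
    have := ih (fun k => f (k + 1)) hm
    rw [sum_range_succ' (fun k => log (pGam α (f k))), sum_range_succ' (fun l => log (1 + f l / α)),
      sum_range_succ' f, add_comm _ (f 0)]
    linarith

lemma log_one_add_div_le_of_le {x : ℝ} (hx : 0 ≤ x) (hα : 0 < α) (hαβ : α ≤ β) :
    log (1 + x / β) ≤ log (1 + x / α) :=
  log_le_log (by have := hα.trans_le hαβ; positivity) (by gcongr)

end pGam

theorem stmt_15_general (q : ℕ) (n : ℕ → ℕ) (k' : ℕ)
    (hk' : k' < q) (hk'pos : 0 < n k')
    (hk'max : ∀ l, k' < l → l < q → n l = 0) :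
    ∀ α α' : ℝ, 0 < α → α ≤ α' →
      (-(∑ l ∈ Finset.range k', Real.log (1 + (n l : ℝ) / α))
          ≤ -(∑ l ∈ Finset.range k', Real.log (1 + (n l : ℝ) / α'))) ∧
      (-Real.log (pGam α (∑ k ∈ Finset.range q, n k)) +
          ∑ k ∈ Finset.range q, Real.log (pGam (α / q) (n k))
        ≤ -(((Finset.range q).filter fun k => 0 < n k).card : ℝ) * Real.log q -
            ∑ l ∈ Finset.range k', Real.log (1 + (n l : ℝ) / α')) := by
  intro α α' hα hαα'
  have hcorr : ∑ l ∈ range k', log (1 + (n l : ℝ) / α')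
      ≤ ∑ l ∈ range k', log (1 + (n l : ℝ) / α) :=
    sum_le_sum fun l _ => log_one_add_div_le_of_le (Nat.cast_nonneg _) hα hαα'
  refine ⟨neg_le_neg hcorr, ?_⟩
  have hN : ∑ k ∈ range q, n k = ∑ k ∈ range (k' + 1), n k :=
    sum_range_eq_sum_range_of_eq_zero hk' hk'max
  have hlog : ∑ k ∈ range q, log (pGam α (n k)) = ∑ k ∈ range (k' + 1), log (pGam α (n k)) :=
    sum_range_eq_sum_range_of_eq_zero hk' fun l hl hlq => by
      rw [hk'max l hl hlq, pGam_zero hα, log_one]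
  have hcells : ∑ k ∈ range q, log (pGam (α / q) (n k))
      ≤ ∑ k ∈ range q, log (pGam α (n k)) - #{k ∈ range q | 0 < n k} * log q :=
    calc _ ≤ ∑ k ∈ range q, (log (pGam α (n k)) - if 0 < n k then log q else 0) :=
          sum_le_sum fun k _ => log_pGam_div_le hα (by exact_mod_cast hk'.pos) (n k)
      _ = _ := by rw [sum_sub_distrib, ← sum_filter, sum_const, nsmul_eq_mul]
  have hchain := sum_log_pGam_add_sum_log_le_log_pGam_sum hα n hk'pos
  rw [hN]
  linarith

/-- Counts in decreasing order (0-based); `k'` is the (0-based) largest index with a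
positive count.  The correction `g(α) = -∑_{l<k'} log(1+n_l/α)` is non-decreasing in
`α`, hence the bound computed at a larger `α'` remains valid. -/
theorem stmt_15 (q : ℕ) (hq : 1 ≤ q) (n : ℕ → ℕ) (k' : ℕ)
    (hdec : ∀ i j, i ≤ j → j < q → n j ≤ n i)
    (hN : 0 < ∑ k ∈ Finset.range q, n k)
    (hk' : k' < q) (hk'pos : 0 < n k')
    (hk'max : ∀ l, k' < l → l < q → n l = 0) :
    ∀ α α' : ℝ, 0 < α → α ≤ α' →
      (-(∑ l ∈ Finset.range k', Real.log (1 + (n l : ℝ) / α))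
          ≤ -(∑ l ∈ Finset.range k', Real.log (1 + (n l : ℝ) / α'))) ∧
      (-Real.log (pGam α (∑ k ∈ Finset.range q, n k)) +
          ∑ k ∈ Finset.range q, Real.log (pGam (α / q) (n k))
        ≤ -(((Finset.range q).filter fun k => 0 < n k).card : ℝ) * Real.log q -
            ∑ l ∈ Finset.range k', Real.log (1 + (n l : ℝ) / α')) :=
  stmt_15_general q n k' hk' hk'pos hk'max
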